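/- arXiv:2512.07717 — 6 statements merged into one kernel-verified Lean document; each statement's English description precedes it below -/
import Mathlib

section
/- Let $g:[a,b]\to\mathbb{R}$ be left-continuous of bounded variation, $\mu_g$ its associated signed Borel measure with $\mu_g([a,t)) = g(t)-g(a)$, and $h\in L^1(|\mu_g|)$ on $[a,b)$. Then the set $T_h^- = \{t \in D_g : 1 + h(t)\,\Delta^+g(t) \le 0\}$ is finite, where $D_g = \{t\in[a,b) : \Delta^+ g(t)\neq 0\}$ and $\Delta^+g(t) = g(t^+)-g(t)$. -/
open Set Filter MeasureTheory
open scoped ENNReal Topology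

/-! The jump `Δ⁺g(t)` is the atom `μ {t}`, so on `T_h⁻` we get
`1 ≤ |h t| |μ {t}| ≤ ∫_{t} |h| d|μ|`. The points of `T_h⁻` are thus disjoint atoms of mass at least
one for the measure `|h| d|μ|`, which is finite on `[a, b)`; hence there are only finitely many. -/

namespace MeasureTheory

theorem Measure.finite_setOf_le_measure_singleton {α : Type*} [MeasurableSpace α]
    [MeasurableSingletonClass α] (ρ : Measure α) {s : Set α} (hs : ρ s ≠ ∞) {ε : ℝ≥0∞}
    (hε : ε ≠ 0) : {x ∈ s | ε ≤ ρ {x}}.Finite := by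
  have hfin : {x : s | ε ≤ ρ {(x : α)}}.Finite :=
    ρ.finite_const_le_meas_of_disjoint_iUnion hε.bot_lt (fun _ ↦ measurableSet_singleton _)
      (fun x y hxy ↦ disjoint_singleton.2 (Subtype.coe_injective.ne hxy))
      (by rwa [iUnion_singleton_eq_range, Subtype.range_coe])
  convert hfin.image ((↑) : s → α) using 1
  ext x
  simp [and_comm]

section OrderTopology

variable {α : Type*} [LinearOrder α] [TopologicalSpace α] [OrderTopology α]
  [FirstCountableTopology α] [NoMaxOrder α] [MeasurableSpace α] [OpensMeasurableSpace α]

theorem Measure.tendsto_measureReal_Ico_nhdsGT (m : Measure α) [IsFiniteMeasure m] (t : α) :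
    Tendsto (fun s ↦ m.real (Ico t s)) (𝓝[>] t) (𝓝 (m.real {t})) := by
  obtain ⟨r, hr⟩ := exists_gt t
  have hInter : ⋂ r > t, Ico t r = {t} := by
    ext x
    simp only [mem_iInter, mem_Ico, mem_singleton_iff]
    exact ⟨fun hx ↦ le_antisymm (not_lt.1 fun htx ↦ (hx x htx).2.false) (hx r hr).1,
      fun hx r hr ↦ ⟨hx.ge, hx ▸ hr⟩⟩
  have hm := tendsto_measure_biInter_gt (μ := m) (s := Ico t) (a := t)
    (fun _ _ ↦ nullMeasurableSet_Ico) (fun _ _ _ hij ↦ Ico_subset_Ico_right hij)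
    ⟨r, hr, measure_ne_top m _⟩
  rw [hInter] at hm
  exact (ENNReal.tendsto_toReal (measure_ne_top m _)).comp hm

theorem SignedMeasure.tendsto_apply_Ico_nhdsGT (μ : SignedMeasure α) (t : α) :
    Tendsto (fun s ↦ μ (Ico t s)) (𝓝[>] t) (𝓝 (μ {t})) := by
  simp only [μ.apply_eq_posPart_real_sub_negPart_real measurableSet_Ico,
    μ.apply_eq_posPart_real_sub_negPart_real (measurableSet_singleton t)]
  exact (Measure.tendsto_measureReal_Ico_nhdsGT _ t).sub
    (Measure.tendsto_measureReal_Ico_nhdsGT _ t)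

end OrderTopology

end MeasureTheory

theorem rightLim_sub_eq_apply_singleton {a b : ℝ} {g : ℝ → ℝ} {μ : SignedMeasure ℝ}
    (hμ : ∀ t ∈ Icc a b, μ (Ico a t) = g t - g a) {t : ℝ} (ht : t ∈ Ico a b) :
    Function.rightLim g t - g t = μ {t} := by
  have hg : (fun s ↦ g t + μ (Ico t s)) =ᶠ[𝓝[>] t] g := by
    filter_upwards [Ioc_mem_nhdsGT ht.2] with s hs
    have hsplit : μ (Ico a s) = μ (Ico a t) + μ (Ico t s) := by
      rw [← VectorMeasure.of_union Ico_disjoint_Ico_same measurableSet_Ico measurableSet_Ico,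
        Ico_union_Ico_eq_Ico ht.1 hs.1.le]
    rw [hμ s ⟨ht.1.trans hs.1.le, hs.2⟩, hμ t ⟨ht.1, ht.2.le⟩] at hsplit
    linarith
  have hlim := (tendsto_const_nhds.add (μ.tendsto_apply_Ico_nhdsGT t)).congr' hg
  rw [rightLim_eq_of_tendsto hlim]
  ring

theorem Th_neg_finite_general (a b : ℝ) (g : ℝ → ℝ)
    (μ : MeasureTheory.SignedMeasure ℝ)
    (hμ : ∀ t ∈ Icc a b, μ (Ico a t) = g t - g a)
    (h : ℝ → ℝ)
    (hh : IntegrableOn h (Ico a b) μ.totalVariation) :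
    {t ∈ Ico a b | Function.rightLim g t ≠ g t ∧
        1 + h t * (Function.rightLim g t - g t) ≤ 0}.Finite := by
  set ρ := μ.totalVariation.withDensity (‖h ·‖ₑ)
  have hρ : ρ (Ico a b) ≠ ∞ := by
    rw [withDensity_apply _ measurableSet_Ico]
    exact hh.2.ne
  refine (ρ.finite_setOf_le_measure_singleton hρ one_ne_zero).subset ?_
  rintro t ⟨ht, -, hneg⟩
  rw [rightLim_sub_eq_apply_singleton hμ ht] at hneg
  refine ⟨ht, ?_⟩
  calc 1 ≤ ‖h t * μ {t}‖ₑ := by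
        rw [Real.enorm_eq_ofReal_abs, ENNReal.one_le_ofReal]
        exact le_abs.2 (Or.inr (by linarith))
    _ = ‖h t‖ₑ * ‖μ {t}‖ₑ := enorm_mul _ _
    _ ≤ ‖h t‖ₑ * μ.totalVariation {t} := by gcongr; exact μ.enorm_le_totalVariation _
    _ = ρ {t} := by rw [withDensity_apply _ (measurableSet_singleton t), lintegral_singleton]

/-- For `h ∈ L¹(|μ_g|)`, the set `T_h⁻ = {t ∈ D_g : 1 + h(t) Δ⁺g(t) ≤ 0}` is finite. -/
theorem Th_neg_finite (a b : ℝ) (hab : a < b) (g : ℝ → ℝ)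
    (hbv : BoundedVariationOn g (Icc a b))
    (hlc : ∀ t ∈ Ioc a b, Tendsto g (nhdsWithin t (Iio t)) (nhds (g t)))
    (μ : MeasureTheory.SignedMeasure ℝ)
    (hμ : ∀ t ∈ Icc a b, μ (Ico a t) = g t - g a)
    (h : ℝ → ℝ)
    (hh : IntegrableOn h (Ico a b) μ.totalVariation) :
    {t ∈ Ico a b | Function.rightLim g t ≠ g t ∧
        1 + h t * (Function.rightLim g t - g t) ≤ 0}.Finite :=
  Th_neg_finite_general a b g μ hμ h hh
end

section
/- Let $g:[a,b]\to\mathbb{R}$ be left-continuous of bounded variation, $h\in L^1(|\mu_g|)$ on $[a,b)$. Then the function $\overline{h}$ defined by $\overline{h}(t) = h(t)$ if $t\notin D_g$, $\overline{h}(t) = \log|1+h(t)\Delta^+g(t)|/\Delta^+g(t)$ if $t\in D_g$ with $1+h(t)\Delta^+g(t)\neq 0$, and $\overline{h}(t)=0$ otherwise, belongs to $L^1(|\mu_g|)$ on $[a,b)$, provided $\{t\in D_g : 1+h(t)\Delta^+g(t) = 0\}$ is empty or one replaces $\overline{h}$ by $0$ from the first such point onward. -/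
open Set Filter MeasureTheory
open scoped Classical Topology ENNReal

/-!
Off the jump set `D_g` the function `h̄` is `h`. The atoms of the finite measure `|μ_g|` are
countable, and `|μ_g|{t} = |Δ⁺g(t)|` because `g(s) - g(t) = μ_g [t, s) → μ_g {t}` as `s ↓ t`.
Hence on `D_g` the integral of `|h̄|` is `∑ |log (1 + h(t)Δ⁺g(t))|`, which converges since
`∑ |h(t)Δ⁺g(t)| ≤ ∫ |h| d|μ_g| < ∞` and `log (1 + x) = O(x)` as `x → 0`.
-/

namespace MeasureTheory

theorem integrableOn_countable_iff {α E : Type*} [MeasurableSpace α] [MeasurableSingletonClass α]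
    [NormedAddCommGroup E] {μ : Measure α} {f : α → E} {s : Set α} (hs : s.Countable) :
    IntegrableOn f s μ ↔ ∑' x : s, ‖f x‖ₑ * μ {(x : α)} ≠ ∞ := by
  have hmeas : AEStronglyMeasurable f (μ.restrict s) := by
    have := hs.to_subtype
    rw [← map_comap_subtype_coe hs.measurableSet,
      (MeasurableEmbedding.subtype_coe hs.measurableSet).aestronglyMeasurable_map_iff]
    exact .of_discrete
  rw [IntegrableOn, Integrable, hasFiniteIntegral_def, lintegral_countable _ hs, lt_top_iff_ne_top]
  exact and_iff_right hmeas

section Order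

variable {α : Type*} [LinearOrder α] [TopologicalSpace α] [OrderTopology α]
  [FirstCountableTopology α] [NoMaxOrder α] [MeasurableSpace α] [OpensMeasurableSpace α]

theorem tendsto_measure_Ico_nhdsGT (ρ : Measure α) [IsFiniteMeasure ρ] (t : α) :
    Tendsto (fun s => ρ (Ico t s)) (𝓝[>] t) (𝓝 (ρ {t})) := by
  have hinter : ⋂ s > t, Ico t s = {t} := by
    ext x
    simp only [mem_iInter, mem_Ico, mem_singleton_iff]
    refine ⟨fun hx => le_antisymm ?_ (hx _ (exists_gt t).choose_spec).1,
      fun hx s hs => ⟨hx.ge, hx ▸ hs⟩⟩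
    exact not_lt.1 fun htx => lt_irrefl x (hx x htx).2
  rw [← hinter]
  exact tendsto_measure_biInter_gt (fun _ _ => measurableSet_Ico.nullMeasurableSet)
    (fun _ _ _ hij => Ico_subset_Ico_right hij)
    ((exists_gt t).imp fun _ hs => ⟨hs, measure_ne_top _ _⟩)

theorem SignedMeasure.tendsto_Ico_nhdsGT [MeasurableSingletonClass α] (μ : SignedMeasure α)
    (t : α) :
    Tendsto (fun s => μ (Ico t s)) (𝓝[>] t) (𝓝 (μ {t})) := by
  have hreal (ρ : Measure α) [IsFiniteMeasure ρ] :
      Tendsto (fun s => ρ.real (Ico t s)) (𝓝[>] t) (𝓝 (ρ.real {t})) :=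
    (ENNReal.tendsto_toReal (measure_ne_top _ _)).comp (tendsto_measure_Ico_nhdsGT ρ t)
  simp_rw [μ.apply_eq_posPart_real_sub_negPart_real measurableSet_Ico,
    μ.apply_eq_posPart_real_sub_negPart_real (measurableSet_singleton t)]
  exact (hreal _).sub (hreal _)

end Order

theorem SignedMeasure.totalVariation_singleton {α : Type*} [MeasurableSpace α]
    [MeasurableSingletonClass α] (μ : SignedMeasure α) (x : α) :
    μ.totalVariation {x} = ‖μ {x}‖ₑ := by
  obtain ⟨S, -, hPS, hNS⟩ := μ.toJordanDecomposition.mutuallySingular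
  rw [SignedMeasure.totalVariation, Measure.add_apply,
    μ.apply_eq_posPart_real_sub_negPart_real (measurableSet_singleton x)]
  by_cases hx : x ∈ S
  · simp only [measureReal_def, measure_mono_null (singleton_subset_iff.2 hx) hPS]
    rw [ENNReal.toReal_zero, zero_sub, enorm_neg, Real.enorm_of_nonneg ENNReal.toReal_nonneg,
      ENNReal.ofReal_toReal (measure_ne_top _ _), zero_add]
  · simp only [measureReal_def, measure_mono_null (singleton_subset_iff.2 hx) hNS]
    rw [ENNReal.toReal_zero, sub_zero, Real.enorm_of_nonneg ENNReal.toReal_nonneg,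
      ENNReal.ofReal_toReal (measure_ne_top _ _), add_zero]

theorem SignedMeasure.rightLim_sub_eq_of_apply_Ico {μ : SignedMeasure ℝ} {g : ℝ → ℝ} {a b t : ℝ}
    (hμ : ∀ s ∈ Icc a b, μ (Ico a s) = g s - g a) (ht : t ∈ Ico a b) :
    Function.rightLim g t - g t = μ {t} := by
  have hIco : ∀ s ∈ Ioc t b, μ (Ico t s) = g s - g t := by
    intro s hs
    have hsplit := μ.of_union (Ico_disjoint_Ico_same (a := a) (b := t) (c := s))
      measurableSet_Ico measurableSet_Ico
    rw [Ico_union_Ico_eq_Ico ht.1 hs.1.le, hμ s ⟨ht.1.trans hs.1.le, hs.2⟩,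
      hμ t ⟨ht.1, ht.2.le⟩] at hsplit
    linarith
  have hg : Tendsto g (𝓝[>] t) (𝓝 (g t + μ {t})) := by
    refine (tendsto_const_nhds.add (SignedMeasure.tendsto_Ico_nhdsGT μ t)).congr' ?_
    filter_upwards [Ioo_mem_nhdsGT ht.2] with s hs
    rw [hIco s ⟨hs.1, hs.2.le⟩]
    ring
  rw [rightLim_eq_of_tendsto hg]
  ring

theorem integrableOn_log_abs_one_add_mul_div {α : Type*} [MeasurableSpace α]
    [MeasurableSingletonClass α] {ν : Measure α} {s : Set α} (hs : s.Countable) {f δ : α → ℝ}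
    (hatom : ∀ x ∈ s, ν {x} = ‖δ x‖ₑ) (hf : IntegrableOn f s ν) :
    IntegrableOn (fun x => Real.log |1 + f x * δ x| / δ x) s ν := by
  have hmul : ∀ x : s, ‖f x‖ₑ * ν {(x : α)} = ‖f x * δ x‖ₑ := fun x => by
    rw [hatom x x.2, enorm_mul]
  have hdiv : ∀ x : s, ‖Real.log |1 + f x * δ x| / δ x‖ₑ * ν {(x : α)}
      = ‖Real.log (1 + f x * δ x)‖ₑ := fun x => by
    rw [hatom x x.2, Real.log_abs]
    by_cases hδ : δ x = 0
    · simp [hδ]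
    · rw [← enorm_mul, div_mul_cancel₀ _ hδ]
  rw [integrableOn_countable_iff hs, tsum_congr hmul, tsum_enorm_ne_top_iff_summable_norm] at hf
  rw [integrableOn_countable_iff hs, tsum_congr hdiv, tsum_enorm_ne_top_iff_summable_norm]
  exact (Real.summable_log_one_add_of_summable hf.of_norm).norm

end MeasureTheory

theorem hbar_integrable_general (a b : ℝ) (g : ℝ → ℝ)
    (μ : MeasureTheory.SignedMeasure ℝ)
    (hμ : ∀ t ∈ Icc a b, μ (Ico a t) = g t - g a)
    (h : ℝ → ℝ)
    (hh : IntegrableOn h (Ico a b) μ.totalVariation) :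
    IntegrableOn
      (fun t => if Function.rightLim g t ≠ g t then
          Real.log |1 + h t * (Function.rightLim g t - g t)| / (Function.rightLim g t - g t)
        else h t)
      (Ico a b) μ.totalVariation := by
  have hatom : ∀ t ∈ Ico a b,
      μ.totalVariation {t} = ‖Function.rightLim g t - g t‖ₑ := fun t ht => by
    rw [SignedMeasure.totalVariation_singleton, SignedMeasure.rightLim_sub_eq_of_apply_Ico hμ ht]
  set D := {t ∈ Ico a b | Function.rightLim g t ≠ g t}
  have hD : D.Countable :=
    (Measure.countable_meas_pos_of_disjoint_iUnion (μ := μ.totalVariation) measurableSet_singleton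
      fun s t hst => disjoint_singleton.2 hst).mono fun t ht => by
        simp [hatom t ht.1, sub_ne_zero.2 ht.2]
  rw [← sdiff_union_of_subset (show D ⊆ Ico a b from fun t ht => ht.1)]
  refine IntegrableOn.union ?_ ?_
  · exact (hh.mono_set sdiff_subset).congr_fun
      (fun t ht => (if_neg fun hjump => ht.2 ⟨ht.1, hjump⟩).symm)
      (measurableSet_Ico.diff hD.measurableSet)
  · exact (integrableOn_log_abs_one_add_mul_div hD (fun t ht => hatom t ht.1)
      (hh.mono_set fun t ht => ht.1)).congr_fun (fun t ht => (if_pos ht.2).symm) hD.measurableSet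

/-- If `1 + h(t)Δ⁺g(t) ≠ 0` on `D_g`, then the modified function `h̄`
(equal to `h` off the jump set and to `log|1+hΔ⁺g|/Δ⁺g` on it) is `|μ_g|`-integrable. -/
theorem hbar_integrable (a b : ℝ) (hab : a < b) (g : ℝ → ℝ)
    (hbv : BoundedVariationOn g (Icc a b))
    (hlc : ∀ t ∈ Ioc a b, Tendsto g (nhdsWithin t (Iio t)) (nhds (g t)))
    (μ : MeasureTheory.SignedMeasure ℝ)
    (hμ : ∀ t ∈ Icc a b, μ (Ico a t) = g t - g a)
    (h : ℝ → ℝ)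
    (hh : IntegrableOn h (Ico a b) μ.totalVariation)
    (hne : ∀ t ∈ Ico a b, Function.rightLim g t ≠ g t →
      1 + h t * (Function.rightLim g t - g t) ≠ 0) :
    IntegrableOn
      (fun t => if Function.rightLim g t ≠ g t then
          Real.log |1 + h t * (Function.rightLim g t - g t)| / (Function.rightLim g t - g t)
        else h t)
      (Ico a b) μ.totalVariation :=
  hbar_integrable_general a b g μ hμ h hh
end

section
/- Let $g:[a,b]\to\mathbb{R}$ be left-continuous and nondecreasing, with associated Lebesgue–Stieltjes measure $\mu_g$. Suppose $\mathcal{D}$ is a family of functions $F:[a,b]\to\mathbb{R}$ of the form $F(t) = F(a) + \int_{[a,t)} f_F\, d\mu_g$ with $|f_F(t)| \le h(t)$ for $\mu_g$-a.e. $t$, for a fixed $h\in L^1(\mu_g)$, and $\{F(a): F\in\mathcal{D}\}$ is bounded. Then $\mathcal{D}$ is $g$-equicontinuous: for each $\varepsilon>0$ and $t\in[a,b]$ there is $\delta>0$ such that $|F(s)-F(t)|<\varepsilon$ for all $F\in\mathcal{D}$ and all $s$ with $|g(s)-g(t)|<\delta$. -/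
open Set Filter MeasureTheory

/-! Over an interval `[u, v)` the increment of `F i` is `∫_{[u,v)} f i dμ`, whose absolute value is
at most `∫_{[u,v)} h dμ`, and `μ [u, v) = g v - g u`. Absolute continuity of the integral of the
single function `h` therefore gives one `δ` that works for the whole family. -/

theorem MeasureTheory.Integrable.exists_pos_forall_norm_setIntegral_lt {α E : Type*}
    [MeasurableSpace α] [NormedAddCommGroup E] [NormedSpace ℝ E] {ν : Measure α} {h : α → ℝ}
    (hh : Integrable h ν) {ε : ℝ} (hε : 0 < ε) :
    ∃ δ > (0 : ℝ), ∀ s, ν s < ENNReal.ofReal δ → ∀ f : α → E,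
      (∀ᵐ x ∂ν, ‖f x‖ ≤ h x) → ‖∫ x in s, f x ∂ν‖ < ε := by
  obtain ⟨δ', hδ'0, hδ'⟩ := exists_pos_setLIntegral_lt_of_measure_lt hh.hasFiniteIntegral.ne
    (ENNReal.ofReal_pos.2 hε).ne'
  obtain ⟨δ, -, hδ0, hδδ'⟩ := ENNReal.lt_iff_exists_real_btwn.1 hδ'0
  refine ⟨δ, ENNReal.ofReal_pos.1 hδ0, fun s hs f hf => ?_⟩
  have hf_le_h : ∫⁻ x in s, ‖f x‖ₑ ∂ν ≤ ∫⁻ x in s, ‖h x‖ₑ ∂ν := by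
    refine lintegral_mono_ae (ae_restrict_of_ae ?_)
    filter_upwards [hf] with x hx
    exact enorm_le_iff_norm_le.2 (hx.trans (Real.le_norm_self _))
  rw [← ENNReal.ofReal_lt_ofReal_iff hε, ofReal_norm]
  exact (enorm_integral_le_lintegral_enorm _).trans_lt
    (hf_le_h.trans_lt (hδ' s (hs.trans hδδ')))

theorem MeasureTheory.setIntegral_Ico_sub_setIntegral_Ico {α E : Type*} [LinearOrder α]
    [TopologicalSpace α] [OrderClosedTopology α] [MeasurableSpace α] [OpensMeasurableSpace α]
    [NormedAddCommGroup E] [NormedSpace ℝ E] {μ : Measure α} {f : α → E} {a u v : α}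
    (hf : IntegrableOn f (Ico a v) μ) (hau : a ≤ u) (huv : u ≤ v) :
    ∫ x in Ico a v, f x ∂μ - ∫ x in Ico a u, f x ∂μ = ∫ x in Ico u v, f x ∂μ := by
  rw [← Ico_union_Ico_eq_Ico hau huv, setIntegral_union Ico_disjoint_Ico_same measurableSet_Ico
    (hf.mono_set (Ico_subset_Ico_right huv)) (hf.mono_set (Ico_subset_Ico_left hau)),
    add_sub_cancel_left]

theorem primitives_g_equicontinuous_general (a b : ℝ) (g : ℝ → ℝ)
    (μ : Measure ℝ)
    (hμ : ∀ u ∈ Icc a b, ∀ v ∈ Icc a b, u ≤ v → μ (Ico u v) = ENNReal.ofReal (g v - g u))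
    {ι : Type*} (F f : ι → ℝ → ℝ) (h : ℝ → ℝ)
    (hint : IntegrableOn h (Ico a b) μ)
    (hfi : ∀ i, IntegrableOn (f i) (Ico a b) μ)
    (hF : ∀ i, ∀ t ∈ Icc a b, F i t = F i a + ∫ s in Ico a t, f i s ∂μ)
    (hdom : ∀ i, ∀ᵐ t ∂(μ.restrict (Ico a b)), |f i t| ≤ h t) :
    ∀ ε > (0 : ℝ), ∀ t ∈ Icc a b, ∃ δ > (0 : ℝ), ∀ i, ∀ s ∈ Icc a b,
      |g s - g t| < δ → |F i s - F i t| < ε := by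
  intro ε hε t ht
  obtain ⟨δ, hδ, hsmall⟩ := hint.exists_pos_forall_norm_setIntegral_lt (E := ℝ) hε
  have increment_lt : ∀ i, ∀ u ∈ Icc a b, ∀ v ∈ Icc a b, u ≤ v → g v - g u < δ →
      |F i v - F i u| < ε := by
    intro i u hu v hv huv hg
    have hsub : Ico u v ⊆ Ico a b := Ico_subset_Ico hu.1 hv.2
    rw [hF i v hv, hF i u hu, add_sub_add_left_eq_sub, setIntegral_Ico_sub_setIntegral_Ico
      ((hfi i).mono_set (Ico_subset_Ico_right hv.2)) hu.1 huv,
      ← Measure.restrict_restrict_of_subset hsub]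
    refine hsmall _ ?_ (f i) (hdom i)
    calc μ.restrict (Ico a b) (Ico u v) ≤ μ (Ico u v) := Measure.restrict_apply_le _ _
      _ = ENNReal.ofReal (g v - g u) := hμ u hu v hv huv
      _ < ENNReal.ofReal δ := (ENNReal.ofReal_lt_ofReal_iff hδ).2 hg
  refine ⟨δ, hδ, fun i s hs hgs => ?_⟩
  rcases le_total t s with hts | hst
  · exact increment_lt i t ht s hs hts ((le_abs_self _).trans_lt hgs)
  · rw [abs_sub_comm] at hgs ⊢
    exact increment_lt i s hs t ht hst ((le_abs_self _).trans_lt hgs)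

/-- A family of primitives with a common integrable dominating function is
`g`-equicontinuous. -/
theorem primitives_g_equicontinuous (a b : ℝ) (hab : a < b) (g : ℝ → ℝ)
    (hmono : MonotoneOn g (Icc a b))
    (hlc : ∀ t ∈ Ioc a b, Tendsto g (nhdsWithin t (Iio t)) (nhds (g t)))
    (μ : Measure ℝ)
    (hμ : ∀ u ∈ Icc a b, ∀ v ∈ Icc a b, u ≤ v → μ (Ico u v) = ENNReal.ofReal (g v - g u))
    {ι : Type*} (F f : ι → ℝ → ℝ) (h : ℝ → ℝ)
    (hint : IntegrableOn h (Ico a b) μ)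
    (hfi : ∀ i, IntegrableOn (f i) (Ico a b) μ)
    (hF : ∀ i, ∀ t ∈ Icc a b, F i t = F i a + ∫ s in Ico a t, f i s ∂μ)
    (hdom : ∀ i, ∀ᵐ t ∂(μ.restrict (Ico a b)), |f i t| ≤ h t)
    (hbd : ∃ C, ∀ i, |F i a| ≤ C) :
    ∀ ε > (0 : ℝ), ∀ t ∈ Icc a b, ∃ δ > (0 : ℝ), ∀ i, ∀ s ∈ Icc a b,
      |g s - g t| < δ → |F i s - F i t| < ε :=
  primitives_g_equicontinuous_general a b g μ hμ F f h hint hfi hF hdom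
end

section
/- Let $g:[a,b]\to\mathbb{R}$ be left-continuous of bounded variation, $t\in D_g$, and suppose $f:[a,b]\to\mathbb{R}$ is $g$-differentiable at $t$ with $f(t^+)\neq f(t)$, and $h$ is defined on a set containing $f(t)$, $f(t^+)$ and the values of $f$ near $t^+$, continuous from the right at $f(t^+)$ in the appropriate sense. Then $h\circ f$ is $g$-differentiable at $t$ and $(h\circ f)'_g(t) = \frac{h(f(t^+)) - h(f(t))}{f(t^+) - f(t)}\cdot f'_g(t)$. -/
open Set Filter

theorem BoundedVariationOn.tendsto_rightLim_of_mem_Ico {α E : Type*} [LinearOrder α]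
    [TopologicalSpace α] [OrderTopology α] [PseudoMetricSpace E] [CompleteSpace E]
    {g : α → E} {a b t : α} (hg : BoundedVariationOn g (Icc a b)) (ht : t ∈ Ico a b) :
    Tendsto g (nhdsWithin t (Ioi t)) (nhds (Function.rightLim g t)) := by
  refine tendsto_rightLim_of_tendsto ?_
  obtain ⟨l, hl⟩ := hg.exists_tendsto_right t
  have hIoc : Icc a b ∩ Ioi t = Ioc t b := by
    ext x; simp only [mem_inter_iff, mem_Icc, mem_Ioi, mem_Ioc]
    exact ⟨fun h => ⟨h.2, h.1.2⟩, fun h => ⟨⟨ht.1.trans h.1.le, h.2⟩, h.1⟩⟩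
  rw [hIoc, nhdsWithin_Ioc_eq_nhdsGT ht.2] at hl
  exact ⟨l, hl⟩

theorem chain_rule_at_jump_general (a b : ℝ) (g : ℝ → ℝ)
    (hbv : BoundedVariationOn g (Icc a b))
    (f h : ℝ → ℝ) (t : ℝ) (ht : t ∈ Ico a b)
    (htD : Function.rightLim g t ≠ g t)
    (ftp : ℝ)
    (hne : ftp ≠ f t)
    (hh : Tendsto (fun s => h (f s)) (nhdsWithin t (Ioc t b)) (nhds (h ftp))) :
    Tendsto (fun s => (h (f s) - h (f t)) / (g s - g t)) (nhdsWithin t (Ioc t b))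
      (nhds ((h ftp - h (f t)) / (ftp - f t) *
        ((ftp - f t) / (Function.rightLim g t - g t)))) := by
  rw [nhdsWithin_Ioc_eq_nhdsGT ht.2] at hh ⊢
  have hg := hbv.tendsto_rightLim_of_mem_Ico ht
  rw [div_mul_div_cancel₀ (sub_ne_zero.mpr hne)]
  exact (hh.sub_const _).div (hg.sub_const _) (sub_ne_zero.mpr htD)

/-- Chain rule at a jump point when `f(t⁺) ≠ f(t)`:
`(h ∘ f)'_g(t) = (h(f(t⁺)) - h(f(t)))/(f(t⁺) - f(t)) · f'_g(t)`. -/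
theorem chain_rule_at_jump (a b : ℝ) (hab : a < b) (g : ℝ → ℝ)
    (hbv : BoundedVariationOn g (Icc a b))
    (hlc : ∀ t ∈ Ioc a b, Tendsto g (nhdsWithin t (Iio t)) (nhds (g t)))
    (f h : ℝ → ℝ) (t : ℝ) (ht : t ∈ Ico a b)
    (htD : Function.rightLim g t ≠ g t)
    (ftp : ℝ) (hf : Tendsto f (nhdsWithin t (Ioc t b)) (nhds ftp))
    (hne : ftp ≠ f t)
    (hh : Tendsto (fun s => h (f s)) (nhdsWithin t (Ioc t b)) (nhds (h ftp))) :
    Tendsto (fun s => (h (f s) - h (f t)) / (g s - g t)) (nhdsWithin t (Ioc t b))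
      (nhds ((h ftp - h (f t)) / (ftp - f t) *
        ((ftp - f t) / (Function.rightLim g t - g t)))) :=
  chain_rule_at_jump_general a b g hbv f h t ht htD ftp hne hh
end

section
/- Let $g:[a,b]\to\mathbb{R}$ be left-continuous of bounded variation, $t\in D_g$, $f$ $g$-differentiable at $t$, and $h\in C^1$ on the closed interval with endpoints $f(t)$ and $f(t^+)$. Then $(h\circ f)'_g(t) = f'_g(t)\int_0^1 h'\big(f(t) + r\, f'_g(t)\, \Delta^+g(t)\big)\, dr$. -/
/-!
At a jump point the `g`-derivative is an ordinary limit of a quotient: the numerator tends to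
`h(f(t⁺)) - h(f(t))` by continuity of `h`, and the denominator to `Δ⁺g(t) ≠ 0`, which exists
because `g` has bounded variation. The fundamental theorem of calculus along the segment from
`f(t)` to `f(t⁺)` turns the difference of `h` into `(f(t⁺) - f(t)) ∫₀¹ h'(f(t) + r (f(t⁺) - f(t))) dr`.
-/

open Set Filter Topology

theorem sub_eq_smul_integral_deriv_segment {E : Type*} [NormedAddCommGroup E] [NormedSpace ℝ E]
    [CompleteSpace E] {u v : ℝ} {h h' : ℝ → E}
    (hh : ∀ y ∈ uIcc u v, HasDerivWithinAt h (h' y) (uIcc u v) y)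
    (hh' : ContinuousOn h' (uIcc u v)) :
    h v - h u = (v - u) • ∫ r in (0:ℝ)..1, h' (u + r * (v - u)) := by
  have hftc : ∫ y in u..v, h' y = h v - h u :=
    intervalIntegral.integral_eq_sub_of_hasDeriv_right
      (fun y hy => (hh y hy).continuousWithinAt)
      (fun y hy => ((hh y (Ioo_subset_Icc_self hy)).hasDerivAt
        (Icc_mem_nhds hy.1 hy.2)).hasDerivWithinAt)
      hh'.intervalIntegrable
  simp_rw [mul_comm _ (v - u)]
  rw [intervalIntegral.smul_integral_comp_add_mul, mul_zero, mul_one, add_zero,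
    add_sub_cancel, hftc]

theorem BoundedVariationOn.tendsto_nhdsGT_rightLim {E : Type*} [MetricSpace E] [CompleteSpace E]
    {g : ℝ → E} {a b t : ℝ} (hg : BoundedVariationOn g (Icc a b)) (ht : t ∈ Ico a b) :
    Tendsto g (𝓝[>] t) (𝓝 (Function.rightLim g t)) := by
  obtain ⟨l, hl⟩ := hg.exists_tendsto_right t
  have hnhds : 𝓝[Icc a b ∩ Ioi t] t = 𝓝[>] t := by
    rw [show Icc a b ∩ Ioi t = Ioc t b by grind, nhdsWithin_Ioc_eq_nhdsGT ht.2]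
  rw [hnhds] at hl
  rwa [rightLim_eq_of_tendsto hl]

theorem chain_rule_integral_form_general (a b : ℝ) (g : ℝ → ℝ)
    (hbv : BoundedVariationOn g (Icc a b))
    (f h h' : ℝ → ℝ) (t : ℝ) (ht : t ∈ Ico a b)
    (htD : Function.rightLim g t ≠ g t)
    (ftp : ℝ) (hf : Tendsto f (nhdsWithin t (Ioc t b)) (nhds ftp))
    (hmap : ∀ s ∈ Ioc t b, f s ∈ uIcc (f t) ftp)
    (hC1 : ∀ y ∈ uIcc (f t) ftp, HasDerivWithinAt h (h' y) (uIcc (f t) ftp) y)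
    (hC1' : ContinuousOn h' (uIcc (f t) ftp)) :
    Tendsto (fun s => (h (f s) - h (f t)) / (g s - g t)) (nhdsWithin t (Ioc t b))
      (nhds (((ftp - f t) / (Function.rightLim g t - g t)) *
        ∫ r in (0:ℝ)..1, h' (f t + r * (((ftp - f t) / (Function.rightLim g t - g t)) *
          (Function.rightLim g t - g t))))) := by
  have hjump : Function.rightLim g t - g t ≠ 0 := sub_ne_zero.2 htD
  have hg : Tendsto g (𝓝[Ioc t b] t) (𝓝 (Function.rightLim g t)) :=
    (hbv.tendsto_nhdsGT_rightLim ht).mono_left (nhdsWithin_mono _ Ioc_subset_Ioi_self)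
  have hf' : Tendsto f (𝓝[Ioc t b] t) (𝓝[uIcc (f t) ftp] ftp) :=
    tendsto_nhdsWithin_iff.2 ⟨hf, eventually_mem_nhdsWithin.mono hmap⟩
  have hhf : Tendsto (fun s => h (f s)) (𝓝[Ioc t b] t) (𝓝 (h ftp)) :=
    (hC1 ftp right_mem_uIcc).continuousWithinAt.tendsto.comp hf'
  have hquot := (hhf.sub_const (h (f t))).div (hg.sub_const (g t)) hjump
  rwa [div_mul_cancel₀ _ hjump, div_mul_eq_mul_div, ← smul_eq_mul (ftp - f t),
    ← sub_eq_smul_integral_deriv_segment hC1 hC1']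

/-- Explicit chain rule at a jump point for `h ∈ C¹` on the interval with
endpoints `f(t)` and `f(t⁺)`:
`(h ∘ f)'_g(t) = f'_g(t) ∫₀¹ h'(f(t) + r f'_g(t) Δ⁺g(t)) dr`. -/
theorem chain_rule_integral_form (a b : ℝ) (hab : a < b) (g : ℝ → ℝ)
    (hbv : BoundedVariationOn g (Icc a b))
    (hlc : ∀ t ∈ Ioc a b, Tendsto g (nhdsWithin t (Iio t)) (nhds (g t)))
    (f h h' : ℝ → ℝ) (t : ℝ) (ht : t ∈ Ico a b)
    (htD : Function.rightLim g t ≠ g t)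
    (ftp : ℝ) (hf : Tendsto f (nhdsWithin t (Ioc t b)) (nhds ftp))
    (hmap : ∀ s ∈ Ioc t b, f s ∈ uIcc (f t) ftp)
    (hC1 : ∀ y ∈ uIcc (f t) ftp, HasDerivWithinAt h (h' y) (uIcc (f t) ftp) y)
    (hC1' : ContinuousOn h' (uIcc (f t) ftp)) :
    Tendsto (fun s => (h (f s) - h (f t)) / (g s - g t)) (nhdsWithin t (Ioc t b))
      (nhds (((ftp - f t) / (Function.rightLim g t - g t)) *
        ∫ r in (0:ℝ)..1, h' (f t + r * (((ftp - f t) / (Function.rightLim g t - g t)) *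
          (Function.rightLim g t - g t))))) :=
  chain_rule_integral_form_general a b g hbv f h h' t ht htD ftp hf hmap hC1 hC1'
end

section
/- Let $g:[a,b]\to\mathbb{R}$ be left-continuous of bounded variation with signed measure $\mu_g$ and total variation measure $|\mu_g|$. Let $f:[a,b]\to\mathbb{R}$ be bounded and $|\mu_g|$-measurable, $t\in[a,b)$ a point where $\widetilde{g}$ is continuous, and suppose there exist $c>0$ and $\delta_0>0$ with $|\widetilde{g}(s)-\widetilde{g}(t)| \le c\,|g(s)-g(t)|$ for all $s$ with $|s-t|<\delta_0$. If $f$ is $\widetilde{g}$-continuous at $t$, then $F(s) = \int_{[a,s)} f\,d\mu_g$ satisfies: for every $\varepsilon>0$ there is $\delta>0$ such that $|F(s)-F(t) - f(t)(g(s)-g(t))| \le \varepsilon\,|g(s)-g(t)|$ for all $s$ with $|s-t|<\delta$. -/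
open Set Filter MeasureTheory

/-
The increment `F s - F t` is the integral of `f` over the interval between `s` and `t`, and
`g s - g t` is its `μ_g`-measure; so the defect is `∫ (f - f t) dμ_g` over that interval, bounded by
`sup |f - f t|` times its `|μ_g|`-measure `|g̃ s - g̃ t|`. Continuity of `g̃` at `t` and
`g̃`-continuity of `f` make the supremum at most `ε / c`, and comparability gives
`|g̃ s - g̃ t| ≤ c |g s - g t|`.
-/

/-- Integral of `f` with respect to a signed measure, via the Jordan decomposition. -/
noncomputable def sInt (μ : MeasureTheory.SignedMeasure ℝ) (f : ℝ → ℝ) (s : Set ℝ) : ℝ :=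
  (∫ x in s, f x ∂μ.toJordanDecomposition.posPart) -
    ∫ x in s, f x ∂μ.toJordanDecomposition.negPart

lemma abs_sub_eq_abs_max_sub_min {α β : Type*} [LinearOrder α] [AddCommGroup β] [LinearOrder β]
    [IsOrderedAddMonoid β] (φ : α → β) (s t : α) :
    |φ s - φ t| = |φ (max s t) - φ (min s t)| := by
  rcases le_total s t with h | h
  · rw [max_eq_right h, min_eq_left h, abs_sub_comm]
  · rw [max_eq_left h, min_eq_right h]

lemma abs_setIntegral_sub_mul_le {α : Type*} [MeasurableSpace α] (ν : Measure α)
    [IsFiniteMeasure ν] {f : α → ℝ} {A : Set α} (hf : AEStronglyMeasurable f (ν.restrict A))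
    (hA : MeasurableSet A)
    {c₀ ξ : ℝ} (hfA : ∀ x ∈ A, |f x - c₀| ≤ ξ) :
    |(∫ x in A, f x ∂ν) - c₀ * ν.real A| ≤ ξ * ν.real A := by
  have hint : IntegrableOn f A ν := by
    refine .of_bound (measure_lt_top ν A) hf (|c₀| + ξ) ?_
    refine ae_restrict_of_forall_mem hA fun x hx => ?_
    calc ‖f x‖ = |c₀ + (f x - c₀)| := by rw [Real.norm_eq_abs, add_sub_cancel]
      _ ≤ |c₀| + ξ := (abs_add_le _ _).trans (add_le_add_right (hfA x hx) _)
  have hsub : (∫ x in A, f x ∂ν) - c₀ * ν.real A = ∫ x in A, (f x - c₀) ∂ν := by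
    rw [integral_sub hint (integrable_const c₀), setIntegral_const, smul_eq_mul, mul_comm]
  rw [hsub]
  exact norm_setIntegral_le_of_norm_le_const (measure_lt_top ν A) fun x hx =>
    (Real.norm_eq_abs _).trans_le (hfA x hx)

namespace MeasureTheory.SignedMeasure

lemma totalVariation_real_apply {α : Type*} [MeasurableSpace α] (μ : SignedMeasure α)
    (A : Set α) :
    μ.totalVariation.real A =
      μ.toJordanDecomposition.posPart.real A + μ.toJordanDecomposition.negPart.real A := by
  rw [totalVariation, measureReal_def, Measure.add_apply,
    ENNReal.toReal_add (measure_ne_top _ _) (measure_ne_top _ _)]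
  rfl

lemma apply_Ico_eq_sub (μ : SignedMeasure ℝ) {a u v : ℝ} (hau : a ≤ u) (huv : u ≤ v) :
    μ (Ico u v) = μ (Ico a v) - μ (Ico a u) := by
  rw [← Ico_union_Ico_eq_Ico hau huv,
    μ.of_union Ico_disjoint_Ico_same measurableSet_Ico measurableSet_Ico, add_sub_cancel_left]

end MeasureTheory.SignedMeasure

section sInt

variable (μ : SignedMeasure ℝ) {f : ℝ → ℝ}

lemma sInt_Ico_sub_sInt_Ico (hf : Measurable f) {C : ℝ} (hC : ∀ x, |f x| ≤ C)
    {a u v : ℝ} (hau : a ≤ u) (huv : u ≤ v) :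
    sInt μ f (Ico a v) - sInt μ f (Ico a u) = sInt μ f (Ico u v) := by
  have hint (ν : Measure ℝ) [IsFiniteMeasure ν] (A : Set ℝ) : IntegrableOn f A ν :=
    .of_bound (measure_lt_top ν A) hf.aestronglyMeasurable C (ae_of_all _ hC)
  unfold sInt
  rw [← Ico_union_Ico_eq_Ico hau huv,
    setIntegral_union Ico_disjoint_Ico_same measurableSet_Ico (hint _ _) (hint _ _),
    setIntegral_union Ico_disjoint_Ico_same measurableSet_Ico (hint _ _) (hint _ _)]
  ring

lemma abs_sInt_sub_mul_le (hf : Measurable f) {A : Set ℝ} (hA : MeasurableSet A)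
    {c₀ ξ : ℝ} (hfA : ∀ x ∈ A, |f x - c₀| ≤ ξ) :
    |sInt μ f A - c₀ * μ A| ≤ ξ * μ.totalVariation.real A := by
  set P := μ.toJordanDecomposition.posPart
  set N := μ.toJordanDecomposition.negPart
  have hsplit : sInt μ f A - c₀ * μ A =
      ((∫ x in A, f x ∂P) - c₀ * P.real A) - ((∫ x in A, f x ∂N) - c₀ * N.real A) := by
    rw [sInt, μ.apply_eq_posPart_real_sub_negPart_real hA]
    ring
  rw [hsplit, μ.totalVariation_real_apply, mul_add]
  exact (abs_sub _ _).trans (add_le_add (abs_setIntegral_sub_mul_le P hf.aestronglyMeasurable hA hfA)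
    (abs_setIntegral_sub_mul_le N hf.aestronglyMeasurable hA hfA))

lemma abs_sInt_Ico_sub_sub_mul_le_of_le (hf : Measurable f) {C : ℝ} (hC : ∀ x, |f x| ≤ C)
    {a u v : ℝ} (hau : a ≤ u) (huv : u ≤ v) {c₀ ξ : ℝ} (hfA : ∀ x ∈ Ico u v, |f x - c₀| ≤ ξ) :
    |sInt μ f (Ico a v) - sInt μ f (Ico a u) - c₀ * (μ (Ico a v) - μ (Ico a u))| ≤
      ξ * μ.totalVariation.real (Ico u v) := by
  rw [sInt_Ico_sub_sInt_Ico μ hf hC hau huv, ← μ.apply_Ico_eq_sub hau huv]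
  exact abs_sInt_sub_mul_le μ hf measurableSet_Ico hfA

lemma abs_sInt_Ico_sub_sub_mul_le (hf : Measurable f) {C : ℝ} (hC : ∀ x, |f x| ≤ C)
    {a s t : ℝ} (has : a ≤ s) (hat : a ≤ t) {c₀ ξ : ℝ}
    (hfA : ∀ x ∈ Ico (min s t) (max s t), |f x - c₀| ≤ ξ) :
    |sInt μ f (Ico a s) - sInt μ f (Ico a t) - c₀ * (μ (Ico a s) - μ (Ico a t))| ≤
      ξ * μ.totalVariation.real (Ico (min s t) (max s t)) := by
  set φ := fun x => sInt μ f (Ico a x) - c₀ * μ (Ico a x)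
  calc _ = |φ s - φ t| := by congr 1; simp only [φ]; ring
    _ = |φ (max s t) - φ (min s t)| := abs_sub_eq_abs_max_sub_min φ s t
    _ = _ := by congr 1; simp only [φ]; ring
    _ ≤ _ := abs_sInt_Ico_sub_sub_mul_le_of_le μ hf hC (le_min has hat) min_le_max hfA

end sInt

theorem primitive_pointwise_estimate_general (a b : ℝ) (g : ℝ → ℝ)
    (μ : MeasureTheory.SignedMeasure ℝ)
    (hμ : ∀ t ∈ Icc a b, μ (Ico a t) = g t - g a)
    (hν : ∀ u ∈ Icc a b, ∀ v ∈ Icc a b, u ≤ v →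
      μ.totalVariation (Ico u v) =
        ENNReal.ofReal (variationOnFromTo g (Icc a b) a v - variationOnFromTo g (Icc a b) a u))
    (f : ℝ → ℝ) (hmeas : Measurable f) (C : ℝ) (hbdd : ∀ s, |f s| ≤ C)
    (t : ℝ) (ht : t ∈ Ico a b)
    (hgt : ContinuousAt (fun s => variationOnFromTo g (Icc a b) a s) t)
    (c δ0 : ℝ) (hc : 0 < c) (hδ0 : 0 < δ0)
    (hcomp : ∀ s ∈ Icc a b, |s - t| < δ0 →
      |variationOnFromTo g (Icc a b) a s - variationOnFromTo g (Icc a b) a t| ≤ c * |g s - g t|)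
    (hft : ∀ ε > (0 : ℝ), ∃ δ > (0 : ℝ), ∀ s ∈ Icc a b,
      |variationOnFromTo g (Icc a b) a s - variationOnFromTo g (Icc a b) a t| < δ →
        |f s - f t| < ε) :
    ∀ ε > (0 : ℝ), ∃ δ > (0 : ℝ), ∀ s ∈ Icc a b, |s - t| < δ →
      |sInt μ f (Ico a s) - sInt μ f (Ico a t) - f t * (g s - g t)| ≤ ε * |g s - g t| := by
  set V := fun s => variationOnFromTo g (Icc a b) a s
  intro ε hε
  obtain ⟨δ₁, hδ₁, hf_near⟩ := hft (ε / c) (div_pos hε hc)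
  obtain ⟨δ₂, hδ₂, hV_near⟩ := Metric.continuousAt_iff.1 hgt δ₁ hδ₁
  refine ⟨min δ₂ δ0, lt_min hδ₂ hδ0, fun s hs hst => ?_⟩
  have htI : t ∈ Icc a b := Ico_subset_Icc_self ht
  have hu : min s t ∈ Icc a b := ⟨le_min hs.1 htI.1, (min_le_left _ _).trans hs.2⟩
  have hv : max s t ∈ Icc a b := ⟨le_max_of_le_left hs.1, max_le hs.2 htI.2⟩
  have hf_between : ∀ τ ∈ Ico (min s t) (max s t), |f τ - f t| ≤ ε / c := fun τ hτ => by
    have hτ : τ ∈ uIcc t s := by rw [uIcc_comm]; exact Ico_subset_Icc_self hτ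
    have hτt : dist τ t < δ₂ :=
      (abs_sub_left_of_mem_uIcc hτ).trans_lt (hst.trans_le (min_le_left _ _))
    exact (hf_near τ (uIcc_subset_Icc htI hs hτ) (hV_near hτt)).le
  have hTV : μ.totalVariation.real (Ico (min s t) (max s t)) ≤ c * |g s - g t| :=
    calc μ.totalVariation.real (Ico (min s t) (max s t))
        = max (V (max s t) - V (min s t)) 0 := by
          rw [measureReal_def, hν _ hu _ hv min_le_max, ENNReal.toReal_ofReal']
      _ ≤ |V (max s t) - V (min s t)| := max_le (le_abs_self _) (abs_nonneg _)
      _ = |V s - V t| := (abs_sub_eq_abs_max_sub_min V s t).symm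
      _ ≤ c * |g s - g t| := hcomp s hs (hst.trans_le (min_le_right _ _))
  have key := abs_sInt_Ico_sub_sub_mul_le μ hmeas hbdd hs.1 htI.1 hf_between
  rw [hμ s hs, hμ t htI, sub_sub_sub_cancel_right] at key
  calc _ ≤ ε / c * (c * |g s - g t|) := key.trans (mul_le_mul_of_nonneg_left hTV (by positivity))
    _ = ε * |g s - g t| := by field_simp

/-- Pointwise differentiation-type estimate for the primitive of a bounded
measurable `g̃`-continuous function at a point where `g̃` is continuous and
comparable to `g`. -/
theorem primitive_pointwise_estimate (a b : ℝ) (hab : a < b) (g : ℝ → ℝ)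
    (hbv : BoundedVariationOn g (Icc a b))
    (hlc : ∀ t ∈ Ioc a b, Tendsto g (nhdsWithin t (Iio t)) (nhds (g t)))
    (μ : MeasureTheory.SignedMeasure ℝ)
    (hμ : ∀ t ∈ Icc a b, μ (Ico a t) = g t - g a)
    (hν : ∀ u ∈ Icc a b, ∀ v ∈ Icc a b, u ≤ v →
      μ.totalVariation (Ico u v) =
        ENNReal.ofReal (variationOnFromTo g (Icc a b) a v - variationOnFromTo g (Icc a b) a u))
    (f : ℝ → ℝ) (hmeas : Measurable f) (C : ℝ) (hbdd : ∀ s, |f s| ≤ C)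
    (t : ℝ) (ht : t ∈ Ico a b)
    (hgt : ContinuousAt (fun s => variationOnFromTo g (Icc a b) a s) t)
    (c δ0 : ℝ) (hc : 0 < c) (hδ0 : 0 < δ0)
    (hcomp : ∀ s ∈ Icc a b, |s - t| < δ0 →
      |variationOnFromTo g (Icc a b) a s - variationOnFromTo g (Icc a b) a t| ≤ c * |g s - g t|)
    (hft : ∀ ε > (0 : ℝ), ∃ δ > (0 : ℝ), ∀ s ∈ Icc a b,
      |variationOnFromTo g (Icc a b) a s - variationOnFromTo g (Icc a b) a t| < δ →
        |f s - f t| < ε) :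
    ∀ ε > (0 : ℝ), ∃ δ > (0 : ℝ), ∀ s ∈ Icc a b, |s - t| < δ →
      |sInt μ f (Ico a s) - sInt μ f (Ico a t) - f t * (g s - g t)| ≤ ε * |g s - g t| :=
  primitive_pointwise_estimate_general a b g μ hμ hν f hmeas C hbdd t ht hgt c δ0 hc hδ0 hcomp hft
end
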